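/- Let p be a prime and let G be an abelian bi-Δ-group which is p-local and satisfies 𝔥_i G = 0 for all i ≤ k. Then for every m with 1 ≤ m ≤ p + k, the short exact sequence 0 → Z_m G → 𝔥_m G →^{p_m} 𝔥_{m−1} G → 0 splits; that is, there exists a group homomorphism r : 𝔥_m G → Z_m G whose restriction to Z_m G is the identity (equivalently, a homomorphism s : 𝔥_{m−1} G → 𝔥_m G with p_m ∘ s = id). -/

import Mathlib

universe u

section

variable (G : ℕ → Type u) [∀ n, AddCommGroup (G n)]
variable (d : ∀ n : ℕ, ℕ → (G (n + 1) →+ G n))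
variable (δ : ∀ n : ℕ, ℕ → (G n →+ G (n + 1)))

/-- The axioms of an (abelian, additively written) bi-Δ-group: a sequence of groups `G n`
with faces `d n j : G (n+1) →+ G n` (for `j ≤ n+1`) and cofaces
`δ n i : G n →+ G (n+1)` (for `i ≤ n+1`), satisfying the simplicial-type identities. -/
structure IsBiDelta : Prop where
  face_face : ∀ n i j : ℕ, i ≤ j → j ≤ n + 1 → ∀ x : G (n + 2),
    d n i (d (n + 1) (j + 1) x) = d n j (d (n + 1) i x)
  coface_coface : ∀ n i j : ℕ, j ≤ i → i ≤ n + 1 → ∀ x : G n,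
    δ (n + 1) j (δ n i x) = δ (n + 1) (i + 1) (δ n j x)
  face_coface_lt : ∀ n i j : ℕ, j ≤ i → i ≤ n + 1 → ∀ x : G (n + 1),
    d (n + 1) j (δ (n + 1) (i + 1) x) = δ n i (d n j x)
  face_coface_eq : ∀ n i : ℕ, i ≤ n + 1 → ∀ x : G n, d n i (δ n i x) = x
  face_coface_gt : ∀ n i j : ℕ, i ≤ j → j ≤ n + 1 → ∀ x : G (n + 1),
    d (n + 1) (j + 1) (δ (n + 1) i x) = δ n i (d n j x)

/-- The `n`-th Cohen group `𝔥_n G = {x ∈ G_n : d_0 x = d_1 x = ⋯ = d_n x}`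
(with `𝔥_0 G = G_0`), as a subgroup of `G n`. -/
def cohenAll : ∀ n : ℕ, AddSubgroup (G n)
  | 0 => ⊤
  | m + 1 =>
    { carrier := { x : G (m + 1) | ∀ j, j ≤ m + 1 → d m j x = d m 0 x }
      add_mem' := fun {a b} ha hb j hj => by
        simp only [Set.mem_setOf_eq] at ha hb ⊢
        rw [map_add, map_add, ha j hj, hb j hj]
      zero_mem' := fun j hj => by simp
      neg_mem' := fun {a} ha j hj => by
        simp only [Set.mem_setOf_eq] at ha ⊢
        rw [map_neg, map_neg, ha j hj] }

/-- The `n`-th Moore cycle group `Z_n G = ⋂_{j=0}^n ker d_j` (with `Z_0 G = G_0`),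
as a subgroup of `G n`. -/
def mooreAll : ∀ n : ℕ, AddSubgroup (G n)
  | 0 => ⊤
  | m + 1 =>
    { carrier := { x : G (m + 1) | ∀ j, j ≤ m + 1 → d m j x = 0 }
      add_mem' := fun {a b} ha hb j hj => by
        simp only [Set.mem_setOf_eq] at ha hb ⊢
        rw [map_add, ha j hj, hb j hj, add_zero]
      zero_mem' := fun j hj => by simp
      neg_mem' := fun {a} ha j hj => by
        simp only [Set.mem_setOf_eq] at ha ⊢
        rw [map_neg, ha j hj, neg_zero] }

/-- Iterated cofaces `d^{c(r-1)} d^{c(r-2)} ⋯ d^{c(0)}(x)` along a tuple `c` of coface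
indices (`c 0` is applied first, at level `k`). -/
def iterCoface (k : ℕ) : ∀ r : ℕ, (Fin r → ℕ) → G k → G (k + r)
  | 0, _, x => x
  | r + 1, c, x => δ (k + r) (c (Fin.last r)) (iterCoface k r (fun i => c i.castSucc) x)

open Classical in
/-- The James–Hopf homomorphism `H_{k,n} : G_k → G_n` (`n = k + r`): the sum, over all
strictly increasing tuples `0 ≤ i_1 < i_2 < ⋯ < i_{n-k} ≤ n`, of
`d^{i_{n-k}} d^{i_{n-k-1}} ⋯ d^{i_1}(x)`. -/
noncomputable def jamesHopf (k r : ℕ) (x : G k) : G (k + r) :=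
  ∑ c ∈ Finset.univ.filter (fun c : Fin r → Fin (k + r + 1) => StrictMono c),
    iterCoface G δ k r (fun i => (c i : ℕ)) x

/-- `σ_{m+1} = H_{m,m+1} = Σ_{i=0}^{m+1} d^i : G m →+ G (m+1)` (as a function). -/
def sigmaMap (m : ℕ) (x : G m) : G (m + 1) :=
  ∑ i ∈ Finset.range (m + 2), δ m i x

/-- The composite `σ_{s+r} ∘ σ_{s+r-1} ∘ ⋯ ∘ σ_{s+1} : G s → G (s+r)`. -/
def sigmaIter (s : ℕ) : ∀ r : ℕ, G s → G (s + r)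
  | 0, x => x
  | r + 1, x => sigmaMap G δ (s + r) (sigmaIter s r x)

/-- The `r`-fold iterate of the zeroth face `d_0 : G (m+r) → G m`,
i.e. `p_{m+1} ∘ p_{m+2} ∘ ⋯ ∘ p_{m+r}` on Cohen groups. -/
def dIter (m : ℕ) : ∀ r : ℕ, G (m + r) → G m
  | 0, x => x
  | r + 1, x => dIter m r (d (m + r) 0 x)

end

/-!
Write `σ = Σᵢ dⁱ` and `p = d₀`. On Cohen groups `p σ = 1 + σ p`, so `A = σ p` satisfies
`p (A - 1) = A p` one level down, while `A` kills `ker p`. Starting from `𝔥_k G = 0`, this gives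
`A (A - 1) ⋯ (A - s) = 0` on `𝔥_{k+s+1} G`. Evaluating that polynomial at `-1` gives `± (s+1)!`,
so `p σ = 1 + A` is invertible as soon as `(s+1)!` is, i.e. for `s + 1 < p` by `p`-locality, and
then `σ (p σ)⁻¹` splits `p`.
-/

open Polynomial
open scoped Nat

theorem Finset.sum_range_succ_insertAt {M : Type*} [AddCommMonoid M] (g : ℕ → M) (c : M)
    {j N : ℕ} (hj : j ≤ N) :
    ∑ i ∈ range (N + 1), (if i < j then g i else if i = j then c else g (i - 1)) =
      c + ∑ i ∈ range N, g i := by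
  induction N, hj using Nat.le_induction with
  | base =>
    rw [sum_range_succ, if_neg (lt_irrefl j), if_pos rfl, add_comm]
    exact congrArg (c + ·) (sum_congr rfl fun i hi => if_pos (mem_range.mp hi))
  | succ N hjN ih =>
    rw [sum_range_succ, ih, if_neg (by omega), if_neg (by omega), sum_range_succ, add_assoc,
      Nat.add_sub_cancel]

theorem LinearMap.comp_aeval_eq_aeval_comp {R M N : Type*} [CommSemiring R] [AddCommMonoid M]
    [Module R M] [AddCommMonoid N] [Module R N] {f : M →ₗ[R] N} {a : Module.End R M}
    {b : Module.End R N} (h : f ∘ₗ a = b ∘ₗ f) (q : R[X]) :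
    f ∘ₗ aeval a q = aeval b q ∘ₗ f := by
  induction q using Polynomial.induction_on' with
  | add q₁ q₂ h₁ h₂ => rw [map_add, map_add, comp_add, add_comp, h₁, h₂]
  | monomial n c =>
    have hpow := Module.End.commute_pow_left_of_commute h.symm n
    ext x
    simp only [aeval_monomial, Module.algebraMap_end_eq_smul_id, Module.End.mul_eq_comp,
      smul_comp, comp_smul, id_comp, hpow]

theorem isUnit_sub_algebraMap_of_aeval_eq_zero {R A : Type*} [CommRing R] [Ring A] [Algebra R A]
    {a : A} {f : R[X]} (hf : aeval a f = 0) {r : R} (hr : IsUnit (algebraMap R A (f.eval r))) :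
    IsUnit (a - algebraMap R A r) := by
  obtain ⟨q, hq⟩ := X_sub_C_dvd_sub_C_eval (a := r) (p := f)
  have hfactor : aeval a (X - C r) * aeval a (-q) = algebraMap R A (f.eval r) := by
    rw [← map_mul, mul_neg, ← hq, neg_sub, map_sub, hf, sub_zero, aeval_C]
  have hcomm : Commute (aeval a (X - C r)) (aeval a (-q)) := (Commute.all _ _).map (aeval a)
  simpa using (hcomm.isUnit_mul_iff.mp (hfactor ▸ hr)).1

theorem descPochhammer_eval_neg_one (R : Type*) [CommRing R] (n : ℕ) :
    (descPochhammer R n).eval (-1) = (-1) ^ n * n ! := by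
  induction n with
  | zero => simp
  | succ n ih =>
    rw [descPochhammer_succ_eval, ih, Nat.factorial_succ]
    push_cast
    ring

theorem isUnit_natCast_of_forall_prime_dvd {R : Type*} [Semiring R] {n : ℕ} (hn : n ≠ 0)
    (h : ∀ q, q.Prime → q ∣ n → IsUnit (q : R)) : IsUnit (n : R) := by
  rw [← Nat.prod_primeFactorsList hn, Nat.cast_list_prod]
  refine List.prod_isUnit fun x hx => ?_
  obtain ⟨q, hq, rfl⟩ := List.mem_map.mp hx
  exact h q (Nat.prime_of_mem_primeFactorsList hq) (Nat.dvd_of_mem_primeFactorsList hq)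

theorem isUnit_factorial_of_lt {R : Type*} [Semiring R] {p n : ℕ}
    (h : ∀ q, q.Prime → q ≠ p → IsUnit (q : R)) (hn : n < p) : IsUnit (n ! : R) :=
  isUnit_natCast_of_forall_prime_dvd n.factorial_ne_zero fun q hq hqn =>
    h q hq (((hq.dvd_factorial).mp hqn).trans_lt hn).ne

section BiDelta

variable {G : ℕ → Type u} [∀ n, AddCommGroup (G n)]
  {d : ∀ n : ℕ, ℕ → (G (n + 1) →+ G n)} {δ : ∀ n : ℕ, ℕ → (G n →+ G (n + 1))}

theorem d_zero_mem_cohenAll (hd : IsBiDelta G d δ) {n : ℕ} {x : G (n + 1)}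
    (hx : x ∈ cohenAll G d (n + 1)) : d n 0 x ∈ cohenAll G d n := by
  cases n with
  | zero => exact AddSubgroup.mem_top _
  | succ n =>
    intro j hj
    rw [← hd.face_face n 0 j (Nat.zero_le _) hj x, hx (j + 1) (by omega)]

theorem face_coface_of_mem_cohenAll (hd : IsBiDelta G d δ) {n i j : ℕ} (hi : i ≤ n + 2)
    (hj : j ≤ n + 2) {x : G (n + 1)} (hx : x ∈ cohenAll G d (n + 1)) :
    d (n + 1) j (δ (n + 1) i x) =
      if i < j then δ n i (d n 0 x) else if i = j then x else δ n (i - 1) (d n 0 x) := by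
  rcases lt_trichotomy i j with hij | rfl | hij
  · obtain ⟨j, rfl⟩ : ∃ j', j = j' + 1 := ⟨j - 1, by omega⟩
    rw [if_pos hij, hd.face_coface_gt n i j (by omega) (by omega) x, hx j (by omega)]
  · rw [if_neg (lt_irrefl i), if_pos rfl, hd.face_coface_eq (n + 1) i hj x]
  · obtain ⟨i, rfl⟩ : ∃ i', i = i' + 1 := ⟨i - 1, by omega⟩
    rw [if_neg (by omega), if_neg (by omega), hd.face_coface_lt n i j (by omega) (by omega) x,
      hx j (by omega), Nat.add_sub_cancel]

theorem face_sigmaMap (hd : IsBiDelta G d δ) {n j : ℕ} (hj : j ≤ n + 2) {x : G (n + 1)}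
    (hx : x ∈ cohenAll G d (n + 1)) :
    d (n + 1) j (sigmaMap G δ (n + 1) x) = x + sigmaMap G δ n (d n 0 x) := by
  rw [sigmaMap, map_sum, Finset.sum_congr rfl fun i hi =>
    face_coface_of_mem_cohenAll hd (Nat.lt_succ_iff.mp (Finset.mem_range.mp hi)) hj hx]
  exact Finset.sum_range_succ_insertAt _ _ hj

theorem sigmaMap_mem_cohenAll (hd : IsBiDelta G d δ) {n : ℕ} {x : G (n + 1)}
    (hx : x ∈ cohenAll G d (n + 1)) : sigmaMap G δ (n + 1) x ∈ cohenAll G d (n + 2) :=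
  fun j hj => by rw [face_sigmaMap hd hj hx, face_sigmaMap hd (Nat.zero_le _) hx]

/-- The map `p_{n+1}`. -/
def cohenFace (hd : IsBiDelta G d δ) (n : ℕ) : cohenAll G d (n + 1) →ₗ[ℤ] cohenAll G d n where
  toFun x := ⟨d n 0 x, d_zero_mem_cohenAll hd x.2⟩
  map_add' _ _ := Subtype.ext (map_add _ _ _)
  map_smul' _ _ := Subtype.ext (map_zsmul _ _ _)

def cohenSigma (hd : IsBiDelta G d δ) (n : ℕ) :
    cohenAll G d (n + 1) →ₗ[ℤ] cohenAll G d (n + 2) where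
  toFun x := ⟨sigmaMap G δ (n + 1) x, sigmaMap_mem_cohenAll hd x.2⟩
  map_add' _ _ := Subtype.ext (by simp [sigmaMap, Finset.sum_add_distrib])
  map_smul' _ _ := Subtype.ext (by simp [sigmaMap, Finset.smul_sum])

/-- `σ ∘ p` on `𝔥_{n+1} G` (see `coe_sigmaFace_apply`), written as `p ∘ σ - 1` because `σ` need
not send `𝔥_0 G` into `𝔥_1 G`. -/
def sigmaFace (hd : IsBiDelta G d δ) (n : ℕ) : Module.End ℤ (cohenAll G d (n + 1)) :=
  cohenFace hd (n + 1) ∘ₗ cohenSigma hd n - 1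

theorem coe_sigmaFace_apply (hd : IsBiDelta G d δ) {n : ℕ} (x : cohenAll G d (n + 1)) :
    (sigmaFace hd n x : G (n + 1)) = sigmaMap G δ n (d n 0 x) := by
  show d (n + 1) 0 (sigmaMap G δ (n + 1) x) - x = _
  rw [face_sigmaMap hd (Nat.zero_le _) x.2, add_sub_cancel_left]

theorem cohenFace_comp_sigmaFace_sub_one (hd : IsBiDelta G d δ) (n : ℕ) :
    cohenFace hd (n + 1) ∘ₗ (sigmaFace hd (n + 1) - 1) =
      sigmaFace hd n ∘ₗ cohenFace hd (n + 1) := by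
  ext x
  have hx := d_zero_mem_cohenAll hd x.2
  show d (n + 1) 0 ((sigmaFace hd (n + 1) x : G (n + 2)) - x) = sigmaFace hd n ⟨_, hx⟩
  rw [coe_sigmaFace_apply hd, coe_sigmaFace_apply hd, map_sub,
    face_sigmaMap hd (Nat.zero_le _) hx, add_sub_cancel_left]

theorem sigmaFace_apply_eq_zero (hd : IsBiDelta G d δ) {n : ℕ} {x : cohenAll G d (n + 2)}
    (hx : cohenFace hd (n + 1) x = 0) : sigmaFace hd (n + 1) x = 0 := by
  have hx' : d (n + 1) 0 x = 0 := congrArg Subtype.val hx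
  exact Subtype.ext (by simp [coe_sigmaFace_apply hd, hx', sigmaMap])

theorem aeval_sigmaFace_descPochhammer (hd : IsBiDelta G d δ) {k : ℕ}
    (hk : ∀ x ∈ cohenAll G d k, x = 0) (s : ℕ) :
    aeval (sigmaFace hd (k + s)) (descPochhammer ℤ (s + 1)) = 0 := by
  induction s with
  | zero =>
    ext x
    simp [coe_sigmaFace_apply hd, hk _ (d_zero_mem_cohenAll hd x.2), sigmaMap]
  | succ s ih =>
    show aeval (sigmaFace hd (k + s + 1)) (descPochhammer ℤ (s + 1 + 1)) = 0
    rw [descPochhammer_succ_left, map_mul, aeval_X, aeval_comp, map_sub, aeval_X, map_one]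
    ext x
    refine congrArg Subtype.val (sigmaFace_apply_eq_zero hd ?_)
    rw [← LinearMap.comp_apply, LinearMap.comp_aeval_eq_aeval_comp
      (cohenFace_comp_sigmaFace_sub_one hd (k + s)), ih, LinearMap.zero_comp, LinearMap.zero_apply]

theorem isUnit_natCast_cohenAll {c : ℕ} (hc : ∀ n, Function.Bijective fun x : G n => c • x)
    (n : ℕ) : IsUnit (c : Module.End ℤ (cohenAll G d (n + 1))) := by
  refine (Module.End.isUnit_iff _).mpr ⟨fun x y hxy => ?_, fun y => ?_⟩
  · exact Subtype.ext ((hc (n + 1)).1 (congrArg Subtype.val hxy))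
  · obtain ⟨x, hx⟩ := (hc (n + 1)).2 y
    refine ⟨⟨x, fun j hj => (hc n).1 ?_⟩, Subtype.ext hx⟩
    simp only [← map_nsmul, hx, y.2 j hj]

theorem isUnit_cohenFace_comp_cohenSigma (hd : IsBiDelta G d δ) {p k : ℕ}
    (hloc : ∀ q : ℕ, q.Prime → q ≠ p → ∀ n, Function.Bijective fun x : G n => q • x)
    (hk : ∀ x ∈ cohenAll G d k, x = 0) {s : ℕ} (hs : s + 1 < p) :
    IsUnit (cohenFace hd (k + s + 1) ∘ₗ cohenSigma hd (k + s)) := by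
  have hfac : IsUnit ((s + 1)! : Module.End ℤ (cohenAll G d (k + s + 1))) :=
    isUnit_factorial_of_lt (fun q hq hqp => isUnit_natCast_cohenAll (hloc q hq hqp) _) hs
  have hunit := isUnit_sub_algebraMap_of_aeval_eq_zero (aeval_sigmaFace_descPochhammer hd hk s)
    (r := -1) (by
      rw [descPochhammer_eval_neg_one, map_mul, map_pow, map_neg, map_one, map_natCast]
      exact (isUnit_neg_one.pow _).mul hfac)
  simpa [sigmaFace] using hunit

theorem exists_cohenFace_comp_eq_id (hd : IsBiDelta G d δ) {p k : ℕ}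
    (hloc : ∀ q : ℕ, q.Prime → q ≠ p → ∀ n, Function.Bijective fun x : G n => q • x)
    (hvanish : ∀ i ≤ k, ∀ x ∈ cohenAll G d i, x = 0) {m : ℕ} (hm : m + 1 ≤ p + k) :
    ∃ σ : cohenAll G d m →ₗ[ℤ] cohenAll G d (m + 1), cohenFace hd m ∘ₗ σ = LinearMap.id := by
  by_cases hmk : m ≤ k
  · refine ⟨0, ?_⟩
    ext y
    simp [hvanish m hmk y y.2]
  obtain ⟨s, rfl⟩ : ∃ s, m = k + s + 1 := ⟨m - k - 1, by omega⟩
  have hu := isUnit_cohenFace_comp_cohenSigma hd hloc (hvanish k le_rfl) (s := s) (by omega)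
  exact ⟨cohenSigma hd (k + s) ∘ₗ ↑hu.unit⁻¹, by rw [← LinearMap.comp_assoc]; exact hu.mul_val_inv⟩

theorem exists_retraction_mooreAll (hd : IsBiDelta G d δ) {m : ℕ}
    (σ : cohenAll G d m →ₗ[ℤ] cohenAll G d (m + 1)) (hσ : cohenFace hd m ∘ₗ σ = LinearMap.id) :
    ∃ r : cohenAll G d (m + 1) →+ mooreAll G d (m + 1),
      ∀ x : cohenAll G d (m + 1), (x : G (m + 1)) ∈ mooreAll G d (m + 1) →
        (r x : G (m + 1)) = x := by
  have hmem (x : cohenAll G d (m + 1)) :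
      (x : G (m + 1)) - σ (cohenFace hd m x) ∈ mooreAll G d (m + 1) := fun j hj => by
    have hσx : d m 0 (σ (cohenFace hd m x)) = d m 0 x :=
      congrArg Subtype.val (LinearMap.congr_fun hσ (cohenFace hd m x))
    rw [map_sub, x.2 j hj, (σ (cohenFace hd m x)).2 j hj, hσx, sub_self]
  refine ⟨AddMonoidHom.mk' (fun x => ⟨_, hmem x⟩) fun x y => Subtype.ext ?_, fun x hx => ?_⟩
  · simp only [map_add, AddSubgroup.coe_add, add_sub_add_comm]
  · have hx0 : cohenFace hd m x = 0 := Subtype.ext (hx 0 (Nat.zero_le _))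
    simp [hx0]

end BiDelta

theorem stmt13_general (G : ℕ → Type u) [∀ n, AddCommGroup (G n)]
    (d : ∀ n : ℕ, ℕ → (G (n + 1) →+ G n)) (δ : ∀ n : ℕ, ℕ → (G n →+ G (n + 1)))
    (h : IsBiDelta G d δ) (p k : ℕ)
    (hloc : ∀ q : ℕ, q.Prime → q ≠ p → ∀ n, Function.Bijective fun x : G n => q • x)
    (hvanish : ∀ i ≤ k, ∀ x ∈ cohenAll G d i, x = 0)
    (m : ℕ) (hm : m + 1 ≤ p + k) :
    ∃ r : ↥(cohenAll G d (m + 1)) →+ ↥(mooreAll G d (m + 1)),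
      ∀ x : ↥(cohenAll G d (m + 1)), (x : G (m + 1)) ∈ mooreAll G d (m + 1) →
        ((r x : ↥(mooreAll G d (m + 1))) : G (m + 1)) = (x : G (m + 1)) := by
  obtain ⟨σ, hσ⟩ := exists_cohenFace_comp_eq_id h hloc hvanish hm
  exact exists_retraction_mooreAll h σ hσ

/-- Let `p` be a prime and `G` an abelian bi-Δ-group which is `p`-local
(multiplication by any prime `q ≠ p` is bijective on each `G n`) and satisfies
`𝔥_i G = 0` for all `i ≤ k`. Then for every `m` with `1 ≤ m ≤ p + k` (here the level is
`m + 1` with `m + 1 ≤ p + k`), the short exact sequence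
`0 → Z_m G → 𝔥_m G → 𝔥_{m-1} G → 0` splits: there is a homomorphism
`r : 𝔥_m G → Z_m G` restricting to the identity on `Z_m G`. -/
theorem stmt13 (G : ℕ → Type u) [∀ n, AddCommGroup (G n)]
    (d : ∀ n : ℕ, ℕ → (G (n + 1) →+ G n)) (δ : ∀ n : ℕ, ℕ → (G n →+ G (n + 1)))
    (h : IsBiDelta G d δ) (p k : ℕ) (hp : p.Prime)
    (hloc : ∀ q : ℕ, q.Prime → q ≠ p → ∀ n, Function.Bijective fun x : G n => q • x)
    (hvanish : ∀ i ≤ k, ∀ x ∈ cohenAll G d i, x = 0)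
    (m : ℕ) (hm : m + 1 ≤ p + k) :
    ∃ r : ↥(cohenAll G d (m + 1)) →+ ↥(mooreAll G d (m + 1)),
      ∀ x : ↥(cohenAll G d (m + 1)), (x : G (m + 1)) ∈ mooreAll G d (m + 1) →
        ((r x : ↥(mooreAll G d (m + 1))) : G (m + 1)) = (x : G (m + 1)) :=
  stmt13_general G d δ h p k hloc hvanish m hm
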